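/- Let G be an r-regular simple graph of order n > 3 and let e = v_i v_j be an edge of G. Then the graph G - e obtained by deleting the edge e satisfies (nr/2 - 1)·M1(G - e) < n·M2(G - e). (Note that G - e has n vertices and nr/2 - 1 edges.) -/
import Mathlib


/-- Degree of a vertex (classical, so it works for any graph on a finite vertex type). -/
noncomputable def gdeg {V : Type*} [Fintype V] (G : SimpleGraph V) (v : V) : ℕ := by
  classical exact G.degree v

/-- First Zagreb index: sum of squares of the vertex degrees. -/
noncomputable def zagrebM1 {V : Type*} [Fintype V] (G : SimpleGraph V) : ℕ :=
  ∑ v, gdeg G v ^ 2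

/-- Second Zagreb index: sum of d(u)·d(v) over the edges uv. -/
noncomputable def zagrebM2 {V : Type*} [Fintype V] (G : SimpleGraph V) : ℕ := by
  classical exact
    ∑ e ∈ G.edgeFinset,
      Sym2.lift ⟨fun u v => gdeg G u * gdeg G v, fun u v => by simp [Nat.mul_comm]⟩ e

/-- The size (number of edges) of a graph. -/
noncomputable def gsize {V : Type*} [Fintype V] (G : SimpleGraph V) : ℕ := by
  classical exact G.edgeFinset.card

/-- A graph is `r`-regular if every vertex has degree `r`. -/
def gregOfDeg {V : Type*} [Fintype V] (G : SimpleGraph V) (r : ℕ) : Prop :=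
  ∀ v, gdeg G v = r

/-- A graph is regular if all its vertices have the same degree. -/
def gregular {V : Type*} [Fintype V] (G : SimpleGraph V) : Prop :=
  ∃ r, gregOfDeg G r

open Finset

lemma gdeg_eq_degree {V : Type*} [Fintype V] (G : SimpleGraph V) [DecidableRel G.Adj] (v : V) :
    gdeg G v = G.degree v := by
  unfold gdeg; congr!

lemma zagrebM2_eq {V : Type*} [Fintype V] (G : SimpleGraph V) [Fintype G.edgeSet] :
    zagrebM2 G = ∑ e ∈ G.edgeFinset,
      Sym2.lift ⟨fun u v => gdeg G u * gdeg G v, fun u v => by simp [Nat.mul_comm]⟩ e := by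
  unfold zagrebM2; congr!

set_option maxHeartbeats 1000000 in
/-- For an `r`-regular graph `G` of order `n > 3` and an edge
`e = vᵢvⱼ` of `G`, the deleted graph satisfies `(nr/2 - 1)·M1(G-e)` < `n·M2(G-e)`. -/
theorem stmt_6 {V : Type*} [Fintype V] (G : SimpleGraph V) (n r : ℕ)
    (hn : n = Fintype.card V) (hn3 : 3 < n) (hreg : gregOfDeg G r)
    (vi vj : V) (hadj : G.Adj vi vj) :
    (n * r / 2 - 1) * zagrebM1 (G.deleteEdges {s(vi, vj)}) <
      n * zagrebM2 (G.deleteEdges {s(vi, vj)}) := by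
  classical
  set G' := G.deleteEdges {s(vi, vj)} with hG'def
  have hne : vi ≠ vj := hadj.ne
  have hdegG : ∀ v, G.degree v = r := fun v => (gdeg_eq_degree G v).symm.trans (hreg v)
  have hr1 : 1 ≤ r := by
    have h0 : 0 < G.degree vi := by
      rw [← SimpleGraph.card_neighborFinset_eq_degree]
      exact Finset.card_pos.mpr ⟨vj, by simpa using hadj⟩
    rw [hdegG vi] at h0; omega
  -- degrees in G'
  have hNvi : G'.neighborFinset vi = (G.neighborFinset vi).erase vj := by
    ext w
    simp only [SimpleGraph.mem_neighborFinset, hG'def, SimpleGraph.deleteEdges_adj,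
      Set.mem_singleton_iff, Sym2.eq_iff, Finset.mem_erase]
    tauto
  have hNvj : G'.neighborFinset vj = (G.neighborFinset vj).erase vi := by
    ext w
    simp only [SimpleGraph.mem_neighborFinset, hG'def, SimpleGraph.deleteEdges_adj,
      Set.mem_singleton_iff, Sym2.eq_iff, Finset.mem_erase]
    tauto
  have hdeg : ∀ v, gdeg G' v = if v = vi ∨ v = vj then r - 1 else r := by
    intro v
    rw [gdeg_eq_degree, ← SimpleGraph.card_neighborFinset_eq_degree]
    by_cases hvi : v = vi
    · subst hvi
      rw [hNvi, Finset.card_erase_of_mem (by simpa using hadj),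
        SimpleGraph.card_neighborFinset_eq_degree, hdegG, if_pos (Or.inl rfl)]
    · by_cases hvj : v = vj
      · subst hvj
        rw [hNvj, Finset.card_erase_of_mem (by simpa using hadj.symm),
          SimpleGraph.card_neighborFinset_eq_degree, hdegG, if_pos (Or.inr rfl)]
      · have hNv : G'.neighborFinset v = G.neighborFinset v := by
          ext w
          simp only [SimpleGraph.mem_neighborFinset, hG'def, SimpleGraph.deleteEdges_adj,
            Set.mem_singleton_iff, Sym2.eq_iff, Finset.mem_erase]
          tauto
        rw [hNv, SimpleGraph.card_neighborFinset_eq_degree, hdegG,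
          if_neg (by tauto)]
  -- handshake
  set m := G.edgeFinset.card with hmdef
  have hm : n * r = 2 * m := by
    have h := G.sum_degrees_eq_twice_card_edges
    rw [Finset.sum_congr rfl fun v _ => hdegG v, Finset.sum_const, Finset.card_univ,
      smul_eq_mul, ← hn] at h
    exact h
  have hm2r : 2 * r ≤ m := by
    have h4 : 4 * r ≤ n * r := Nat.mul_le_mul_right r (by omega)
    omega
  -- M1
  have hM1 : zagrebM1 G' = (n - 2) * r ^ 2 + 2 * (r - 1) ^ 2 := by
    unfold zagrebM1
    rw [← Finset.sum_sdiff (Finset.subset_univ {vi, vj}), Finset.sum_pair hne,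
      hdeg vi, hdeg vj, if_pos (Or.inl rfl), if_pos (Or.inr rfl),
      Finset.sum_congr rfl (fun v hv => by
        rw [hdeg v, if_neg]
        simp only [Finset.mem_sdiff, Finset.mem_insert, Finset.mem_singleton] at hv
        tauto),
      Finset.sum_const, Finset.card_sdiff_of_subset (Finset.subset_univ _), Finset.card_univ,
      Finset.card_pair hne, ← hn, smul_eq_mul]
    ring
  -- edge finset of G'
  have hE : G'.edgeFinset = G.edgeFinset.erase s(vi, vj) := by
    ext e
    simp only [SimpleGraph.mem_edgeFinset, hG'def, SimpleGraph.edgeSet_deleteEdges,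
      Set.mem_diff, Set.mem_singleton_iff, Finset.mem_erase]
    tauto
  have hcardE : G'.edgeFinset.card = m - 1 := by
    rw [hE, Finset.card_erase_of_mem (SimpleGraph.mem_edgeFinset.mpr hadj)]
  -- M2
  have hM2 : zagrebM2 G' = (2 * (r - 1)) * ((r - 1) * r) + ((m - 1) - 2 * (r - 1)) * (r * r) := by
    rw [zagrebM2_eq]
    rw [← Finset.sum_filter_add_sum_filter_not G'.edgeFinset (fun e => vi ∈ e ∨ vj ∈ e)]
    have hcardp : (G'.edgeFinset.filter (fun e => vi ∈ e ∨ vj ∈ e)).card = 2 * (r - 1) := by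
      rw [Finset.filter_or, ← SimpleGraph.incidenceFinset_eq_filter,
        ← SimpleGraph.incidenceFinset_eq_filter,
        Finset.card_union_of_disjoint, SimpleGraph.card_incidenceFinset_eq_degree,
        SimpleGraph.card_incidenceFinset_eq_degree, ← gdeg_eq_degree, ← gdeg_eq_degree,
        hdeg vi, hdeg vj, if_pos (Or.inl rfl), if_pos (Or.inr rfl)]
      · ring
      · rw [Finset.disjoint_left]
        intro e hei hej
        rw [SimpleGraph.mem_incidenceFinset] at hei hej
        have he' : e = s(vi, vj) := (Sym2.mem_and_mem_iff hne).mp ⟨hei.2, hej.2⟩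
        have : e ∈ G'.edgeSet := hei.1
        rw [hG'def, SimpleGraph.edgeSet_deleteEdges] at this
        exact this.2 (by simpa using he')
    have hsum1 : ∑ e ∈ G'.edgeFinset.filter (fun e => vi ∈ e ∨ vj ∈ e),
        Sym2.lift ⟨fun u v => gdeg G' u * gdeg G' v, fun u v => by simp [Nat.mul_comm]⟩ e
        = (2 * (r - 1)) * ((r - 1) * r) := by
      rw [Finset.sum_congr rfl (fun e he => ?_), Finset.sum_const, hcardp, smul_eq_mul]
      rw [Finset.mem_filter] at he
      obtain ⟨heE, hp⟩ := he
      induction e using Sym2.ind with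
      | _ a b =>
        rw [SimpleGraph.mem_edgeFinset, SimpleGraph.mem_edgeSet, hG'def,
          SimpleGraph.deleteEdges_adj] at heE
        obtain ⟨hab, hnotE⟩ := heE
        simp only [Sym2.mem_iff] at hp
        have hnotboth : ¬((a = vi ∨ a = vj) ∧ (b = vi ∨ b = vj)) := by
          rintro ⟨(rfl | rfl), (rfl | rfl)⟩
          · exact hab.ne rfl
          · exact hnotE rfl
          · exact hnotE (Sym2.eq_swap)
          · exact hab.ne rfl
        rw [Sym2.lift_mk]
        simp only
        rw [hdeg a, hdeg b]
        by_cases ha : a = vi ∨ a = vj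
        · have hb : ¬(b = vi ∨ b = vj) := fun hb => hnotboth ⟨ha, hb⟩
          rw [if_pos ha, if_neg hb]
        · have hb : b = vi ∨ b = vj := by tauto
          rw [if_neg ha, if_pos hb, Nat.mul_comm]
    have hsum2 : ∑ e ∈ G'.edgeFinset.filter (fun e => ¬(vi ∈ e ∨ vj ∈ e)),
        Sym2.lift ⟨fun u v => gdeg G' u * gdeg G' v, fun u v => by simp [Nat.mul_comm]⟩ e
        = ((m - 1) - 2 * (r - 1)) * (r * r) := by
      have hcardnp : (G'.edgeFinset.filter (fun e => ¬(vi ∈ e ∨ vj ∈ e))).card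
          = (m - 1) - 2 * (r - 1) := by
        have := Finset.card_filter_add_card_filter_not (s := G'.edgeFinset)
          (p := fun e => vi ∈ e ∨ vj ∈ e)
        rw [hcardE] at this
        omega
      rw [Finset.sum_congr rfl (fun e he => ?_), Finset.sum_const, hcardnp, smul_eq_mul]
      rw [Finset.mem_filter] at he
      obtain ⟨heE, hp⟩ := he
      induction e using Sym2.ind with
      | _ a b =>
        simp only [Sym2.mem_iff] at hp
        push_neg at hp
        rw [Sym2.lift_mk]
        simp only
        rw [hdeg a, hdeg b, if_neg (by tauto), if_neg (by tauto)]
    rw [hsum1, hsum2]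
  -- final arithmetic
  rw [hM1, hM2, show n * r / 2 = m by omega]
  have hm1 : 1 ≤ m := by omega
  have hn2 : 2 ≤ n := by omega
  have hsub : 2 * (r - 1) ≤ m - 1 := by omega
  zify [hm1, hn2, hr1, hsub]
  have hmz : (n : ℤ) * r = 2 * m := by exact_mod_cast hm
  have hm2rz : 2 * (r : ℤ) ≤ m := by exact_mod_cast hm2r
  nlinarith [hmz, hm2rz, sq_nonneg ((r : ℤ) - 1)]
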